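/- Let a, ã, b, b̃, c, c̃ ∈ (0, 0.1]. Then: (1) □(s_ã) ∩ □(p_{a,b}) ≠ ∅ if and only if ã = a; (2) □(p_{a,b̃}) ∩ □(q_{b,c}) ≠ ∅ if and only if b̃ = b; (3) □(t_c̃) ∩ □(q_{b,c}) ≠ ∅ if and only if c̃ = c. -/
import Mathlib


noncomputable section

/-- The closed axis-parallel hypercube of side length 1 centered at `p ∈ ℝ⁴`. -/
def cube (p : Fin 4 → ℝ) : Set (Fin 4 → ℝ) :=
  {x | ∀ i, |x i - p i| ≤ 1 / 2}

/-- Center `s_a = (a, −a, 0, 0)`. -/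
def sC (a : ℝ) : Fin 4 → ℝ := ![a, -a, 0, 0]

/-- Center `p_{a,b} = (1+a, 1−a, 0.5+b, 0.5−b)`. -/
def pC (a b : ℝ) : Fin 4 → ℝ := ![1 + a, 1 - a, 0.5 + b, 0.5 - b]

/-- Center `q_{b,c} = (1+c, 1−c, 1.5+b, 1.5−b)`. -/
def qC (b c : ℝ) : Fin 4 → ℝ := ![1 + c, 1 - c, 1.5 + b, 1.5 - b]

/-- Center `t_c = (c, −c, 2, 2)`. -/
def tC (c : ℝ) : Fin 4 → ℝ := ![c, -c, 2, 2]

lemma cube_inter_nonempty (p q : Fin 4 → ℝ) :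
    (cube p ∩ cube q).Nonempty ↔ ∀ i, |p i - q i| ≤ 1 := by
  constructor
  · rintro ⟨x, hp, hq⟩ i
    have h1 := hp i
    have h2 := hq i
    rw [abs_le] at h1 h2 ⊢
    constructor <;> [linarith [h1.1, h2.2]; linarith [h1.2, h2.1]]
  · intro h
    refine ⟨fun i => (p i + q i) / 2, fun i => ?_, fun i => ?_⟩
    · have := h i; rw [abs_le] at this ⊢; constructor <;> linarith [this.1, this.2]
    · have := h i; rw [abs_le] at this ⊢; constructor <;> linarith [this.1, this.2]

theorem stmt3 (a a' b b' c c' : ℝ)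
    (ha : a ∈ Set.Ioc (0 : ℝ) 0.1) (ha' : a' ∈ Set.Ioc (0 : ℝ) 0.1)
    (hb : b ∈ Set.Ioc (0 : ℝ) 0.1) (hb' : b' ∈ Set.Ioc (0 : ℝ) 0.1)
    (hc : c ∈ Set.Ioc (0 : ℝ) 0.1) (hc' : c' ∈ Set.Ioc (0 : ℝ) 0.1) :
    ((cube (sC a') ∩ cube (pC a b)).Nonempty ↔ a' = a) ∧
    ((cube (pC a b') ∩ cube (qC b c)).Nonempty ↔ b' = b) ∧
    ((cube (tC c') ∩ cube (qC b c)).Nonempty ↔ c' = c) := by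
  obtain ⟨ha1, ha2⟩ := ha; obtain ⟨ha'1, ha'2⟩ := ha'
  obtain ⟨hb1, hb2⟩ := hb; obtain ⟨hb'1, hb'2⟩ := hb'
  obtain ⟨hc1, hc2⟩ := hc; obtain ⟨hc'1, hc'2⟩ := hc'
  norm_num at ha2 ha'2 hb2 hb'2 hc2 hc'2
  refine ⟨?_, ?_, ?_⟩ <;>
    rw [cube_inter_nonempty] <;>
    simp only [sC, pC, qC, tC, Fin.forall_fin_succ, Fin.forall_fin_zero_pi,
      Matrix.cons_val_zero, Matrix.cons_val_succ, abs_le] <;>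
    constructor <;> intro h
  · linarith [h.1.1, h.1.2, h.2.1.1, h.2.1.2]
  · subst h; norm_num; and_intros <;> linarith
  · linarith [h.2.2.1.1, h.2.2.1.2, h.2.2.2.1.1, h.2.2.2.1.2]
  · subst h; norm_num; and_intros <;> linarith
  · linarith [h.1.1, h.1.2, h.2.1.1, h.2.1.2]
  · subst h; norm_num; and_intros <;> linarith
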